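/- arXiv:2008.03049 — 5 statements merged into one kernel-verified Lean document; each statement's English description precedes it below -/
import Mathlib

section
/- Let 0 → A →f B →g C → 0 be a short exact sequence of finitely generated abelian groups (f injective, g surjective, ker g = im f). Then the sequence splits — i.e., g admits a group-homomorphism section s : C → B with g ∘ s = id_C (equivalently, f admits a retraction) — if and only if B is isomorphic to A ⊕ C as an abelian group. -/
/-!
One direction is the splitting lemma. Conversely, suppose `B ≃ A × C`. For `n ≠ 0` the `n`-torsion
functor is left exact, so `0 → A[n] → B[n] → C[n]` is exact, and all three groups are finite with
`|B[n]| = |A[n]| |C[n]|`; counting forces `B[n] → C[n]` to be onto. Thus every element of `C`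
killed by `n` lifts to an element of `B` killed by `n`, i.e. every `ZMod n → C` lifts through `g`.
Homomorphisms from free abelian groups lift through the surjection `g` anyway, so by the structure
theorem every homomorphism out of a finitely generated abelian group lifts, in particular `id C`.
-/
open Function AddSubgroup

lemma AddMonoidHom.surjective_of_card_eq_card_ker_mul {G H : Type*} [AddGroup G] [AddGroup H]
    [Finite G] (φ : G →+ H) (h : Nat.card G = Nat.card φ.ker * Nat.card H) : Surjective φ := by
  have hG : Nat.card G = Nat.card φ.range * Nat.card φ.ker := by
    rw [card_eq_card_quotient_mul_card_addSubgroup φ.ker,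
      Nat.card_congr (QuotientAddGroup.quotientKerEquivRange φ).toEquiv]
  have hcard : Nat.card φ.range = Nat.card H := by
    have : 0 < Nat.card φ.ker := Nat.card_pos
    rw [hG, mul_comm] at h
    exact Nat.eq_of_mul_eq_mul_left this h
  have : Finite φ.range := Finite.of_surjective _ φ.rangeRestrict_surjective
  have : Finite H := Nat.finite_of_card_ne_zero (hcard ▸ Nat.card_pos.ne')
  exact AddMonoidHom.range_eq_top.mp (eq_top_of_card_eq _ hcard)

namespace AddSubgroup

variable {A B C : Type*} [AddCommGroup A] [AddCommGroup B] [AddCommGroup C] {n : ℕ}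

lemma finite_torsionBy [AddGroup.FG A] (hn : n ≠ 0) : Finite (torsionBy A n) := by
  have : Module.Finite ℤ A := Module.Finite.iff_addGroup_fg.mpr ‹_›
  refine Module.finite_of_fg_torsion (Submodule.torsionBy ℤ A n) fun x =>
    ⟨⟨n, mem_nonZeroDivisors_of_ne_zero (by exact_mod_cast hn)⟩, ?_⟩
  exact Submodule.smul_torsionBy _ x

lemma map_mem_torsionBy (f : A →+ B) {x : A} (hx : x ∈ torsionBy A n) : f x ∈ torsionBy B n := by
  rw [torsionBy.nsmul_iff] at hx ⊢
  rw [← map_nsmul, hx, map_zero]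

lemma torsionBy_prod : torsionBy (A × C) n = (torsionBy A n).prod (torsionBy C n) := by
  ext x
  simp [mem_prod, Prod.ext_iff]

lemma card_torsionBy_of_addEquiv (e : B ≃+ A × C) :
    Nat.card (torsionBy B n) = Nat.card (torsionBy A n) * Nat.card (torsionBy C n) := by
  rw [← Nat.card_prod, ← Nat.card_congr (prodEquiv _ _).toEquiv, ← torsionBy_prod]
  refine Nat.card_congr (e.toEquiv.subtypeEquiv fun x => ?_)
  simp [← map_nsmul]

end AddSubgroup

namespace AddMonoidHom

variable {A B C : Type*} [AddCommGroup A] [AddCommGroup B] [AddCommGroup C] (n : ℕ)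

def torsionByMap (f : A →+ B) : torsionBy A n →+ torsionBy B n :=
  (f.comp (torsionBy A n).subtype).codRestrict _ fun x => map_mem_torsionBy f x.2

variable {n}

lemma torsionByMap_injective {f : A →+ B} (hf : Injective f) : Injective (f.torsionByMap n) :=
  fun _ _ h => Subtype.ext (hf (congrArg Subtype.val h))

end AddMonoidHom

namespace Function.Exact

variable {A B C : Type*} [AddCommGroup A] [AddCommGroup B] [AddCommGroup C] {n : ℕ}
  {f : A →+ B} {g : B →+ C}

lemma torsionByMap (h : Exact f g) (hf : Injective f) :
    Exact (f.torsionByMap n) (g.torsionByMap n) := by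
  intro b
  constructor
  · intro hb
    obtain ⟨a, ha⟩ := (h b).mp (congrArg Subtype.val hb)
    have hna : a ∈ torsionBy A n := by
      rw [torsionBy.nsmul_iff]
      apply hf
      rw [map_nsmul, ha, map_zero, ← torsionBy.nsmul_iff]
      exact b.2
    exact ⟨⟨a, hna⟩, Subtype.ext ha⟩
  · rintro ⟨a, rfl⟩
    exact Subtype.ext (h.apply_apply_eq_zero (a : A))

lemma exists_preimage_nsmul_eq_zero [AddGroup.FG A] [AddGroup.FG C] (h : Exact f g)
    (hf : Injective f) (e : B ≃+ A × C) (hn : n ≠ 0) {c : C} (hc : n • c = 0) :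
    ∃ b, g b = c ∧ n • b = 0 := by
  have := finite_torsionBy (A := A) hn
  have := finite_torsionBy (A := C) hn
  have hB := card_torsionBy_of_addEquiv (n := n) e
  have : Finite (torsionBy B n) :=
    Nat.finite_of_card_ne_zero (hB ▸ mul_ne_zero Nat.card_pos.ne' Nat.card_pos.ne')
  have hker : Nat.card (g.torsionByMap n).ker = Nat.card (torsionBy A n) := by
    rw [(h.torsionByMap hf).addMonoidHom_ker_eq,
      ← Nat.card_congr (AddMonoidHom.ofInjective (AddMonoidHom.torsionByMap_injective hf)).toEquiv]
  obtain ⟨b, hb⟩ := (g.torsionByMap n).surjective_of_card_eq_card_ker_mul (hker ▸ hB)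
    ⟨c, torsionBy.nsmul_iff.mpr hc⟩
  exact ⟨b, congrArg Subtype.val hb, torsionBy.nsmul_iff.mp b.2⟩

end Function.Exact

def AddMonoidHom.LiftsAlong {B C : Type*} [AddCommGroup B] [AddCommGroup C] (g : B →+ C)
    (M : Type*) [AddCommGroup M] : Prop :=
  ∀ φ : M →+ C, ∃ ψ : M →+ B, g.comp ψ = φ

namespace AddMonoidHom.LiftsAlong

variable {B C M N : Type*} [AddCommGroup B] [AddCommGroup C] [AddCommGroup M] [AddCommGroup N]
  {g : B →+ C}

lemma of_addEquiv (h : g.LiftsAlong N) (e : M ≃+ N) : g.LiftsAlong M := by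
  intro φ
  obtain ⟨ψ, hψ⟩ := h (φ.comp e.symm.toAddMonoidHom)
  refine ⟨ψ.comp e.toAddMonoidHom, ?_⟩
  rw [← AddMonoidHom.comp_assoc, hψ, AddMonoidHom.comp_assoc]
  ext; simp

lemma prod (hM : g.LiftsAlong M) (hN : g.LiftsAlong N) : g.LiftsAlong (M × N) := by
  intro φ
  obtain ⟨ψ₁, h₁⟩ := hM (φ.comp (AddMonoidHom.inl M N))
  obtain ⟨ψ₂, h₂⟩ := hN (φ.comp (AddMonoidHom.inr M N))
  refine ⟨ψ₁.coprod ψ₂, AddMonoidHom.ext fun x => ?_⟩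
  have h₁x := DFunLike.congr_fun h₁ x.1
  have h₂x := DFunLike.congr_fun h₂ x.2
  simp only [AddMonoidHom.comp_apply, inl_apply, inr_apply] at h₁x h₂x
  rw [AddMonoidHom.comp_apply, coprod_apply, map_add, h₁x, h₂x, ← map_add, Prod.mk_add_mk, add_zero,
    zero_add]

lemma directSum {ι : Type*} [DecidableEq ι] {M : ι → Type*} [∀ i, AddCommGroup (M i)]
    (h : ∀ i, g.LiftsAlong (M i)) : g.LiftsAlong (DirectSum ι M) := by
  intro φ
  choose ψ hψ using fun i => h i (φ.comp (DirectSum.of M i))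
  refine ⟨DirectSum.toAddMonoid ψ, DirectSum.addHom_ext fun i x => ?_⟩
  simpa using DFunLike.congr_fun (hψ i) x

end AddMonoidHom.LiftsAlong

namespace AddMonoidHom

variable {B C : Type*} [AddCommGroup B] [AddCommGroup C] {g : B →+ C}

lemma liftsAlong_of_projective (hg : Surjective g) (P : Type*) [AddCommGroup P]
    [Module.Projective ℤ P] : g.LiftsAlong P := by
  intro φ
  obtain ⟨ψ, hψ⟩ := Module.projective_lifting_property g.toIntLinearMap φ.toIntLinearMap hg
  exact ⟨ψ.toAddMonoidHom, AddMonoidHom.ext (LinearMap.congr_fun hψ)⟩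

lemma liftsAlong_zmod {n : ℕ} (hlift : ∀ c : C, n • c = 0 → ∃ b, g b = c ∧ n • b = 0) :
    g.LiftsAlong (ZMod n) := by
  intro φ
  obtain ⟨b, hb, hnb⟩ := hlift (φ 1) (by rw [← map_nsmul, nsmul_one, ZMod.natCast_self, map_zero])
  refine ⟨ZMod.lift n ⟨zmultiplesHom B b, by simpa using hnb⟩, ?_⟩
  ext x
  obtain ⟨m, rfl⟩ := ZMod.intCast_surjective x
  simp only [comp_apply, ZMod.lift_coe, zmultiplesHom_apply]
  rw [map_zsmul, hb, ← map_zsmul, zsmul_one]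

lemma liftsAlong_of_fg (hg : Surjective g)
    (hlift : ∀ n : ℕ, n ≠ 0 → ∀ c : C, n • c = 0 → ∃ b, g b = c ∧ n • b = 0)
    (M : Type*) [AddCommGroup M] [AddGroup.FG M] : g.LiftsAlong M := by
  classical
  obtain ⟨_, ι, _, p, hp, _, ⟨ψ⟩⟩ := AddCommGroup.equiv_free_prod_directSum_zmod M
  refine LiftsAlong.of_addEquiv (LiftsAlong.prod (liftsAlong_of_projective hg _) ?_) ψ
  exact LiftsAlong.directSum fun i => liftsAlong_zmod (hlift _ (pow_ne_zero _ (hp i).ne_zero))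

end AddMonoidHom

theorem stmt0_general (A B C : Type) [AddCommGroup A] [AddCommGroup B] [AddCommGroup C]
    [AddGroup.FG A] [AddGroup.FG C]
    (f : A →+ B) (g : B →+ C)
    (hf : Function.Injective f) (hg : Function.Surjective g)
    (hexact : ∀ b : B, g b = 0 ↔ b ∈ Set.range f) :
    (∃ s : C →+ B, g.comp s = AddMonoidHom.id C) ↔ Nonempty (B ≃+ A × C) := by
  constructor
  · rintro ⟨s, hs⟩
    have hexact' : Exact f.toIntLinearMap g.toIntLinearMap := hexact
    obtain ⟨e, -⟩ := hexact'.splitSurjectiveEquiv hf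
      ⟨s.toIntLinearMap, LinearMap.ext fun c => DFunLike.congr_fun hs c⟩
    exact ⟨e.toAddEquiv⟩
  · rintro ⟨e⟩
    have hlift : ∀ n : ℕ, n ≠ 0 → ∀ c : C, n • c = 0 → ∃ b, g b = c ∧ n • b = 0 :=
      fun _ hn _ hc => Exact.exists_preimage_nsmul_eq_zero hexact hf e hn hc
    exact g.liftsAlong_of_fg hg hlift C (AddMonoidHom.id C)

/-- A short exact sequence `0 → A → B → C → 0` of finitely generated abelian groups
splits (i.e. `g` admits a group-homomorphism section) if and only if
`B` is isomorphic to `A ⊕ C` as an abelian group. -/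
theorem stmt0 (A B C : Type) [AddCommGroup A] [AddCommGroup B] [AddCommGroup C]
    [AddGroup.FG A] [AddGroup.FG B] [AddGroup.FG C]
    (f : A →+ B) (g : B →+ C)
    (hf : Function.Injective f) (hg : Function.Surjective g)
    (hexact : ∀ b : B, g b = 0 ↔ b ∈ Set.range f) :
    (∃ s : C →+ B, g.comp s = AddMonoidHom.id C) ↔ Nonempty (B ≃+ A × C) :=
  stmt0_general A B C f g hf hg hexact
end

section
/- Let A, B, C be finite abelian groups (equivalently, ℤ-modules of finite length) and let 0 → A →f B →g C → 0 be a short exact sequence. If B is isomorphic to A ⊕ C as an abelian group, then the sequence splits, i.e., g admits a group-homomorphism section s : C → B with g ∘ s = id_C. -/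
/-!
Apply the functor `Hom(C, -)` to `0 → A → B → C → 0`: since `f` is injective, the sequence
`0 → Hom(C, A) → Hom(C, B) → Hom(C, C)` is exact, so the image of postcomposition with `g`
has `|Hom(C, B)| / |Hom(C, A)|` elements. As `B ≅ A × C`, this quotient is `|Hom(C, C)|`,
so postcomposition with `g` is onto and `id_C` lifts to a section of `g`.
-/

open Function

instance AddMonoidHom.finite {M N : Type*} [AddZeroClass M] [AddZeroClass N] [Finite M]
    [Finite N] : Finite (M →+ N) :=
  .of_injective _ DFunLike.coe_injective

theorem AddMonoidHom.card_prod {M N P : Type*} [AddZeroClass M] [AddCommMonoid N]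
    [AddCommMonoid P] : Nat.card (M →+ N × P) = Nat.card (M →+ N) * Nat.card (M →+ P) := by
  rw [← Nat.card_prod]
  exact Nat.card_congr
    { toFun := fun φ ↦ ((fst N P).comp φ, (snd N P).comp φ)
      invFun := fun φ ↦ φ.1.prod φ.2
      left_inv := prod_unique
      right_inv := fun φ ↦ Prod.ext (fst_comp_prod φ.1 φ.2) (snd_comp_prod φ.1 φ.2) }

theorem Function.Exact.addMonoidHom_surjective_of_card_eq_mul {X Y Z : Type*}
    [AddGroup X] [AddGroup Y] [AddGroup Z] [Finite Y] [Finite Z] {i : X →+ Y} {p : Y →+ Z}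
    (hexact : Exact i p) (hi : Injective i) (hcard : Nat.card Y = Nat.card X * Nat.card Z) :
    Surjective p := by
  apply p.surjective_of_card_ker_le_div
  rw [hexact.addMonoidHom_ker_eq, ← Nat.card_congr (AddMonoidHom.ofInjective hi).toEquiv, hcard,
    Nat.mul_div_cancel _ Nat.card_pos]

section HomLeftExact

variable {M A B C : Type*} [AddZeroClass M] [AddCommGroup A] [AddCommGroup B] [AddCommGroup C]

theorem AddMonoidHom.compHom_injective {f : A →+ B} (hf : Injective f) :
    Injective (AddMonoidHom.compHom f : (M →+ A) →+ (M →+ B)) :=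
  fun _ _ h ↦ AddMonoidHom.ext fun m ↦ hf (DFunLike.congr_fun h m)

theorem Function.Exact.addMonoidHom_compHom {f : A →+ B} {g : B →+ C} (hexact : Exact f g)
    (hf : Injective f) :
    Exact (AddMonoidHom.compHom f : (M →+ A) →+ (M →+ B)) (AddMonoidHom.compHom g) := by
  intro ψ
  constructor
  · intro hψ
    have hrange : ∀ m, ψ m ∈ f.range := fun m ↦ by
      rw [← hexact.addMonoidHom_ker_eq]
      exact DFunLike.congr_fun hψ m
    refine ⟨(AddMonoidHom.ofInjective hf).symm.toAddMonoidHom.comp (ψ.codRestrict _ hrange), ?_⟩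
    ext m
    exact congrArg Subtype.val
      ((AddMonoidHom.ofInjective hf).apply_symm_apply ⟨ψ m, hrange m⟩)
  · rintro ⟨φ, rfl⟩
    ext m
    exact hexact.apply_apply_eq_zero (φ m)

end HomLeftExact

theorem stmt1_general (A B C : Type) [AddCommGroup A] [AddCommGroup B] [AddCommGroup C]
    [Finite B] [Finite C]
    (f : A →+ B) (g : B →+ C)
    (hf : Function.Injective f)
    (hexact : ∀ b : B, g b = 0 ↔ b ∈ Set.range f)
    (hiso : Nonempty (B ≃+ A × C)) :
    ∃ s : C →+ B, g.comp s = AddMonoidHom.id C := by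
  obtain ⟨e⟩ := hiso
  have hcard : Nat.card (C →+ B) = Nat.card (C →+ A) * Nat.card (C →+ C) := by
    rw [Nat.card_congr (AddEquiv.addMonoidHomCongrRightEquiv e), AddMonoidHom.card_prod]
  have hexact_hom :
      Exact (AddMonoidHom.compHom f : (C →+ A) →+ (C →+ B)) (AddMonoidHom.compHom g) :=
    Exact.addMonoidHom_compHom hexact hf
  exact hexact_hom.addMonoidHom_surjective_of_card_eq_mul (AddMonoidHom.compHom_injective hf)
    hcard (AddMonoidHom.id C)

/-- For a short exact sequence `0 → A → B → C → 0` of finite abelian groups,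
if `B ≅ A ⊕ C` as abelian groups then the sequence splits: `g` admits a
group-homomorphism section. -/
theorem stmt1 (A B C : Type) [AddCommGroup A] [AddCommGroup B] [AddCommGroup C]
    [Finite A] [Finite B] [Finite C]
    (f : A →+ B) (g : B →+ C)
    (hf : Function.Injective f) (hg : Function.Surjective g)
    (hexact : ∀ b : B, g b = 0 ↔ b ∈ Set.range f)
    (hiso : Nonempty (B ≃+ A × C)) :
    ∃ s : C →+ B, g.comp s = AddMonoidHom.id C :=
  stmt1_general A B C f g hf hexact hiso
end

section
/- The operation ∘ on G(t,r) is associative with two-sided identity (1,0,0), so G(t,r) is a monoid. An element (x,y,z) ∈ G(t,r) is invertible with respect to ∘ if and only if x is a unit of ℤ/2^{t+1} (equivalently, x is the class of an odd integer). Consequently, the group E(t,r) of invertible elements of G(t,r) has order 2^{t+2r+1} = 2^{t+r+min(r,t)+1}. -/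
/-- The composition law of `[C,C]` for the elementary Chang complex `C = C^{n+2,t}_r`
with `t ≥ r`, in coordinates `ℤ/2^{t+1} × ℤ/2^{r+1} × ℤ/2^r`:
`(x,y,z)∘(x',y',z') = (x·x', π(x)·y' + π(x')·y + y·μ(z'), π(x)·z' + π(x')·z + 2·z·z')`,
where `π` denotes the canonical projections and `μ` the doubling map
`ℤ/2^r → ℤ/2^{r+1}`. -/
def changOp (t r : ℕ) (htr : r ≤ t)
    (a b : ZMod (2 ^ (t + 1)) × ZMod (2 ^ (r + 1)) × ZMod (2 ^ r)) :
    ZMod (2 ^ (t + 1)) × ZMod (2 ^ (r + 1)) × ZMod (2 ^ r) :=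
  (a.1 * b.1,
   ZMod.castHom (pow_dvd_pow 2 (by omega : r + 1 ≤ t + 1)) (ZMod (2 ^ (r + 1))) a.1 * b.2.1
     + ZMod.castHom (pow_dvd_pow 2 (by omega : r + 1 ≤ t + 1)) (ZMod (2 ^ (r + 1))) b.1 * a.2.1
     + a.2.1 * (2 * (ZMod.cast b.2.2 : ZMod (2 ^ (r + 1)))),
   ZMod.castHom (pow_dvd_pow 2 (by omega : r ≤ t + 1)) (ZMod (2 ^ r)) a.1 * b.2.2
     + ZMod.castHom (pow_dvd_pow 2 (by omega : r ≤ t + 1)) (ZMod (2 ^ r)) b.1 * a.2.2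
     + 2 * a.2.2 * b.2.2)

/-!
The doubling map `μ : ℤ/2^r → ℤ/2^{r+1}` is additive, commutes with multiplication by `π x`,
and satisfies `μ (2 z z') = μ z · μ z'`; with these, associativity becomes a ring identity.
If `x` is a unit then so are `π x` and `π x + 2 z` (as `2` is nilpotent in `ℤ/2^r`), which lets
one solve `a ∘ b = 1` coordinate by coordinate; and since `G(t,r)` is a finite monoid, a right
inverse is two-sided. Hence the invertible elements are `(ℤ/2^{t+1})ˣ × ℤ/2^{r+1} × ℤ/2^r`, of
order `φ(2^{t+1}) · 2^{2r+1} = 2^{t+2r+1}`.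
-/

namespace ZMod

section Doubling

variable {r : ℕ}

theorem two_mul_cast_natCast (n : ℕ) :
    (2 : ZMod (2 ^ (r + 1))) * ZMod.cast (n : ZMod (2 ^ r)) = 2 * n := by
  have hmod : 2 * (n % 2 ^ r) % 2 ^ (r + 1) = 2 * n % 2 ^ (r + 1) := by
    rw [pow_succ', Nat.mul_mod_mul_left, Nat.mul_mod_mul_left, Nat.mod_mod]
  rw [cast_eq_val, val_natCast]
  exact_mod_cast (natCast_eq_natCast_iff' _ _ _).mpr hmod

theorem two_mul_cast_add (w w' : ZMod (2 ^ r)) :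
    (2 : ZMod (2 ^ (r + 1))) * ZMod.cast (w + w') = 2 * ZMod.cast w + 2 * ZMod.cast w' := by
  obtain ⟨n, rfl⟩ := natCast_zmod_surjective w
  obtain ⟨n', rfl⟩ := natCast_zmod_surjective w'
  rw [← Nat.cast_add, two_mul_cast_natCast, two_mul_cast_natCast, two_mul_cast_natCast]
  push_cast
  ring

theorem two_mul_cast_cast_mul {m : ℕ} [NeZero m] (h : 2 ^ (r + 1) ∣ m) (x : ZMod m)
    (w : ZMod (2 ^ r)) :
    (2 : ZMod (2 ^ (r + 1))) * ZMod.cast (ZMod.cast x * w) =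
      ZMod.cast x * (2 * ZMod.cast w) := by
  obtain ⟨n, rfl⟩ := natCast_zmod_surjective w
  obtain ⟨k, rfl⟩ := natCast_zmod_surjective x
  rw [cast_natCast (R := ZMod (2 ^ (r + 1))) h,
    cast_natCast (R := ZMod (2 ^ r)) ((pow_dvd_pow 2 r.le_succ).trans h), ← Nat.cast_mul,
    two_mul_cast_natCast, two_mul_cast_natCast]
  push_cast
  ring

theorem two_mul_cast_two_mul_mul (w w' : ZMod (2 ^ r)) :
    (2 : ZMod (2 ^ (r + 1))) * ZMod.cast (2 * w * w') =
      (2 * ZMod.cast w) * (2 * ZMod.cast w') := by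
  obtain ⟨n, rfl⟩ := natCast_zmod_surjective w
  obtain ⟨n', rfl⟩ := natCast_zmod_surjective w'
  rw [show (2 : ZMod (2 ^ r)) * n * n' = (2 * n * n' : ℕ) by push_cast; ring,
    two_mul_cast_natCast, two_mul_cast_natCast, two_mul_cast_natCast]
  push_cast
  ring

end Doubling

theorem isNilpotent_natCast_pow (p r : ℕ) : IsNilpotent (p : ZMod (p ^ r)) :=
  ⟨r, by rw [← Nat.cast_pow, natCast_self]⟩

theorem isUnit_iff_odd_val {k : ℕ} (hk : k ≠ 0) (x : ZMod (2 ^ k)) : IsUnit x ↔ Odd x.val := by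
  rw [← natCast_zmod_val x, isUnit_natCast_iff_not_dvd_pow Nat.prime_two (Nat.pos_of_ne_zero hk),
    val_natCast_of_lt x.val_lt, Nat.odd_iff, Nat.two_dvd_ne_zero]

theorem card_isUnit_eq_totient (n : ℕ) [NeZero n] :
    Nat.card {x : ZMod n // IsUnit x} = n.totient := by
  rw [← card_units_eq_totient, ← Nat.card_eq_fintype_card]
  exact Nat.card_range_of_injective Units.val_injective

end ZMod

open ZMod hiding cast

section ChangOp

variable {t r : ℕ} (htr : r ≤ t)

theorem changOp_assoc (a b c : ZMod (2 ^ (t + 1)) × ZMod (2 ^ (r + 1)) × ZMod (2 ^ r)) :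
    changOp t r htr (changOp t r htr a b) c = changOp t r htr a (changOp t r htr b c) := by
  simp only [changOp, map_mul, castHom_apply, Prod.mk.injEq]
  refine ⟨mul_assoc _ _ _, ?_, by ring⟩
  rw [two_mul_cast_add, two_mul_cast_add, two_mul_cast_cast_mul (pow_dvd_pow 2 (by omega)),
    two_mul_cast_cast_mul (pow_dvd_pow 2 (by omega)), two_mul_cast_two_mul_mul]
  ring

theorem one_changOp (a : ZMod (2 ^ (t + 1)) × ZMod (2 ^ (r + 1)) × ZMod (2 ^ r)) :
    changOp t r htr (1, 0, 0) a = a := by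
  simp [changOp, -castHom_apply]

theorem changOp_one (a : ZMod (2 ^ (t + 1)) × ZMod (2 ^ (r + 1)) × ZMod (2 ^ r)) :
    changOp t r htr a (1, 0, 0) = a := by
  simp [changOp, -castHom_apply]

theorem exists_changOp_eq_one {a : ZMod (2 ^ (t + 1)) × ZMod (2 ^ (r + 1)) × ZMod (2 ^ r)}
    (ha : IsUnit a.1) : ∃ b, changOp t r htr a b = (1, 0, 0) := by
  obtain ⟨x, y, z⟩ := a
  have hx : IsUnit (ZMod.cast x : ZMod (2 ^ (r + 1))) := by
    simpa using ha.map (castHom (pow_dvd_pow 2 (by omega : r + 1 ≤ t + 1)) (ZMod (2 ^ (r + 1))))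
  have hw : IsUnit (ZMod.cast x + 2 * z : ZMod (2 ^ r)) := by
    have hπx : IsUnit (ZMod.cast x : ZMod (2 ^ r)) := by
      simpa using ha.map (castHom (pow_dvd_pow 2 (by omega : r ≤ t + 1)) (ZMod (2 ^ r)))
    have h2 : IsNilpotent (2 : ZMod (2 ^ r)) := by exact_mod_cast isNilpotent_natCast_pow 2 r
    exact ((Commute.all 2 z).isNilpotent_mul_right h2).isUnit_add_left_of_commute hπx
      (Commute.all _ _)
  set z' : ZMod (2 ^ r) := -(ZMod.cast x⁻¹ * z * (ZMod.cast x + 2 * z)⁻¹)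
  set y' : ZMod (2 ^ (r + 1)) :=
    -((ZMod.cast x)⁻¹ * (ZMod.cast x⁻¹ * y + y * (2 * ZMod.cast z')))
  refine ⟨(x⁻¹, y', z'), ?_⟩
  simp only [changOp, castHom_apply, Prod.mk.injEq]
  refine ⟨mul_inv_of_unit x ha, ?_, ?_⟩
  · linear_combination (-(ZMod.cast x⁻¹ * y + y * (2 * ZMod.cast z'))) * mul_inv_of_unit _ hx
  · linear_combination (-(ZMod.cast x⁻¹ * z)) * mul_inv_of_unit _ hw

end ChangOp

/-- A type synonym, so that the componentwise multiplication of the product is not in the way. -/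
def ChangMonoid (t r : ℕ) (_ : r ≤ t) : Type :=
  ZMod (2 ^ (t + 1)) × ZMod (2 ^ (r + 1)) × ZMod (2 ^ r)

namespace ChangMonoid

variable {t r : ℕ} (htr : r ≤ t)

instance : Monoid (ChangMonoid t r htr) where
  mul := changOp t r htr
  one := (1, 0, 0)
  mul_assoc := changOp_assoc htr
  one_mul := one_changOp htr
  mul_one := changOp_one htr

instance : Finite (ChangMonoid t r htr) :=
  inferInstanceAs (Finite (ZMod _ × ZMod _ × ZMod _))

end ChangMonoid

theorem exists_changOp_inverse_iff {t r : ℕ} (htr : r ≤ t)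
    (a : ZMod (2 ^ (t + 1)) × ZMod (2 ^ (r + 1)) × ZMod (2 ^ r)) :
    (∃ b, changOp t r htr a b = (1, 0, 0) ∧ changOp t r htr b a = (1, 0, 0)) ↔ IsUnit a.1 := by
  refine ⟨fun ⟨b, hab, _⟩ => IsUnit.of_mul_eq_one b.1 (congrArg Prod.fst hab), fun ha => ?_⟩
  obtain ⟨b, hab⟩ := exists_changOp_eq_one htr ha
  -- a finite monoid is Dedekind-finite, so the right inverse `b` is two-sided
  exact isUnit_iff_exists.mp (IsUnit.of_mul_eq_one (M := ChangMonoid t r htr) b hab)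

theorem stmt3_general (t r : ℕ) (htr : r ≤ t) :
    (∀ a b c : ZMod (2 ^ (t + 1)) × ZMod (2 ^ (r + 1)) × ZMod (2 ^ r),
      changOp t r htr (changOp t r htr a b) c = changOp t r htr a (changOp t r htr b c)) ∧
    (∀ a : ZMod (2 ^ (t + 1)) × ZMod (2 ^ (r + 1)) × ZMod (2 ^ r),
      changOp t r htr (1, 0, 0) a = a ∧ changOp t r htr a (1, 0, 0) = a) ∧
    (∀ a : ZMod (2 ^ (t + 1)) × ZMod (2 ^ (r + 1)) × ZMod (2 ^ r),
      ((∃ b, changOp t r htr a b = (1, 0, 0) ∧ changOp t r htr b a = (1, 0, 0)) ↔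
        IsUnit a.1)) ∧
    (∀ a : ZMod (2 ^ (t + 1)) × ZMod (2 ^ (r + 1)) × ZMod (2 ^ r),
      IsUnit a.1 ↔ Odd a.1.val) ∧
    Nat.card {a : ZMod (2 ^ (t + 1)) × ZMod (2 ^ (r + 1)) × ZMod (2 ^ r) //
        ∃ b, changOp t r htr a b = (1, 0, 0) ∧ changOp t r htr b a = (1, 0, 0)}
      = 2 ^ (t + 2 * r + 1) ∧
    2 ^ (t + 2 * r + 1) = 2 ^ (t + r + min r t + 1) := by
  refine ⟨changOp_assoc htr, fun a => ⟨one_changOp htr a, changOp_one htr a⟩,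
    exists_changOp_inverse_iff htr, fun a => isUnit_iff_odd_val t.add_one_ne_zero a.1, ?_, ?_⟩
  · rw [Nat.card_congr ((Equiv.subtypeEquivRight (exists_changOp_inverse_iff htr)).trans
        Equiv.prodSubtypeFstEquivSubtypeProd), Nat.card_prod, card_isUnit_eq_totient,
      Nat.totient_prime_pow Nat.prime_two t.add_one_pos, Nat.card_prod, Nat.card_zmod,
      Nat.card_zmod, Nat.add_sub_cancel]
    ring
  · rw [min_eq_left htr]
    ring_nf

/-- For `t ≥ r ≥ 1`, the operation `∘` on `G(t,r) = ℤ/2^{t+1} × ℤ/2^{r+1} × ℤ/2^r` is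
associative with two-sided identity `(1,0,0)`; an element `(x,y,z)` is invertible iff
`x` is a unit of `ℤ/2^{t+1}` (equivalently, the class of an odd integer); and the group
`E(t,r)` of invertible elements has order `2^{t+2r+1} = 2^{t+r+min(r,t)+1}`. -/
theorem stmt3 (t r : ℕ) (hr : 1 ≤ r) (htr : r ≤ t) :
    (∀ a b c : ZMod (2 ^ (t + 1)) × ZMod (2 ^ (r + 1)) × ZMod (2 ^ r),
      changOp t r htr (changOp t r htr a b) c = changOp t r htr a (changOp t r htr b c)) ∧
    (∀ a : ZMod (2 ^ (t + 1)) × ZMod (2 ^ (r + 1)) × ZMod (2 ^ r),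
      changOp t r htr (1, 0, 0) a = a ∧ changOp t r htr a (1, 0, 0) = a) ∧
    (∀ a : ZMod (2 ^ (t + 1)) × ZMod (2 ^ (r + 1)) × ZMod (2 ^ r),
      ((∃ b, changOp t r htr a b = (1, 0, 0) ∧ changOp t r htr b a = (1, 0, 0)) ↔
        IsUnit a.1)) ∧
    (∀ a : ZMod (2 ^ (t + 1)) × ZMod (2 ^ (r + 1)) × ZMod (2 ^ r),
      IsUnit a.1 ↔ Odd a.1.val) ∧
    Nat.card {a : ZMod (2 ^ (t + 1)) × ZMod (2 ^ (r + 1)) × ZMod (2 ^ r) //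
        ∃ b, changOp t r htr a b = (1, 0, 0) ∧ changOp t r htr b a = (1, 0, 0)}
      = 2 ^ (t + 2 * r + 1) ∧
    2 ^ (t + 2 * r + 1) = 2 ^ (t + r + min r t + 1) :=
  stmt3_general t r htr
end

section
/- Let E(t,r) denote the group of invertible elements of the monoid G(t,r), i.e., the triples (x,y,z) with x a unit of ℤ/2^{t+1}. The map φ : E(t,r) → (ℤ/2^{t+1})ˣ × (ℤ/2^{r+1})ˣ defined by φ(x,y,z) = (x, π(x) + μ(z)) is a surjective group homomorphism, and its kernel equals {(1,y,0) : y ∈ ℤ/2^{r+1}}, which is a cyclic subgroup of order 2^{r+1} generated by the element (1,1,0). -/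
/-- The set `E(t,r)` of invertible elements of the monoid `G(t,r)`. -/
def changE (t r : ℕ) (htr : r ≤ t) :
    Set (ZMod (2 ^ (t + 1)) × ZMod (2 ^ (r + 1)) × ZMod (2 ^ r)) :=
  {a | ∃ b, changOp t r htr a b = (1, 0, 0) ∧ changOp t r htr b a = (1, 0, 0)}

/-- The map `φ(x,y,z) = (x, π(x) + μ(z))`. -/
def changPhi (t r : ℕ) (htr : r ≤ t)
    (a : ZMod (2 ^ (t + 1)) × ZMod (2 ^ (r + 1)) × ZMod (2 ^ r)) :
    ZMod (2 ^ (t + 1)) × ZMod (2 ^ (r + 1)) :=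
  (a.1,
   ZMod.castHom (pow_dvd_pow 2 (by omega : r + 1 ≤ t + 1)) (ZMod (2 ^ (r + 1))) a.1
     + 2 * (ZMod.cast a.2.2 : ZMod (2 ^ (r + 1))))


lemma natCast_mul_cast_intCast {m k N : ℕ} (h : m * k = N) (n : ℤ) :
    (k : ZMod N) * ZMod.cast (n : ZMod m) = k * n := by
  subst h
  have hN : ((m : ZMod (m * k)) * k) = 0 := by exact_mod_cast ZMod.natCast_self (m * k)
  rw [← ZMod.intCast_cast, ZMod.coe_intCast, Int.emod_def]
  push_cast
  linear_combination (-(n / m : ℤ) : ZMod (m * k)) * hN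

lemma isUnit_intCast_two_pow_iff {k : ℕ} (hk : k ≠ 0) (n : ℤ) :
    IsUnit (n : ZMod (2 ^ k)) ↔ Odd n := by
  rw [ZMod.coe_int_isUnit_iff_isCoprime, Nat.cast_pow, Nat.cast_ofNat,
    IsCoprime.pow_left_iff (Nat.pos_of_ne_zero hk), Int.isCoprime_two_left]

lemma isUnit_intCast_two_pow_of_odd (k : ℕ) {n : ℤ} (hn : Odd n) :
    IsUnit (n : ZMod (2 ^ k)) := by
  rw [ZMod.coe_int_isUnit_iff_isCoprime, Nat.cast_pow, Nat.cast_ofNat]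
  exact (Int.isCoprime_two_left.mpr hn).pow_left

lemma two_mul_cast_eq_of_intCast_eq {r : ℕ} {z : ZMod (2 ^ r)} {n : ℤ}
    (h : (n : ZMod (2 ^ r)) = z) : (2 : ZMod (2 ^ (r + 1))) * ZMod.cast z = 2 * n := by
  subst h
  exact_mod_cast natCast_mul_cast_intCast (pow_succ 2 r).symm n

lemma eq_zero_of_two_mul_cast_eq_zero {r : ℕ} {z : ZMod (2 ^ r)}
    (h : (2 : ZMod (2 ^ (r + 1))) * ZMod.cast z = 0) : z = 0 := by
  obtain ⟨c, rfl⟩ := ZMod.intCast_surjective z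
  rw [two_mul_cast_eq_of_intCast_eq rfl] at h
  rw [ZMod.intCast_zmod_eq_zero_iff_dvd]
  have h' : ((2 * c : ℤ) : ZMod (2 ^ (r + 1))) = 0 := by exact_mod_cast h
  rw [ZMod.intCast_zmod_eq_zero_iff_dvd, Nat.cast_pow, pow_succ, mul_comm 2 c] at h'
  push_cast
  exact (mul_dvd_mul_iff_right two_ne_zero).mp h'

lemma isUnit_castHom_add_two_mul {t k : ℕ} (h : 2 ^ k ∣ 2 ^ (t + 1)) {x : ZMod (2 ^ (t + 1))}
    (hx : IsUnit x) (z : ZMod (2 ^ k)) : IsUnit (ZMod.castHom h (ZMod (2 ^ k)) x + 2 * z) := by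
  obtain ⟨p, rfl⟩ := ZMod.intCast_surjective x
  obtain ⟨c, rfl⟩ := ZMod.intCast_surjective z
  rw [isUnit_intCast_two_pow_iff t.succ_ne_zero] at hx
  rw [map_intCast]
  exact_mod_cast isUnit_intCast_two_pow_of_odd k (hx.add_even (even_two_mul c))

abbrev ChangTriple (t r : ℕ) := ZMod (2 ^ (t + 1)) × ZMod (2 ^ (r + 1)) × ZMod (2 ^ r)

section Chang

variable {t r : ℕ} {htr : r ≤ t}

lemma changPhi_changOp (a b : ChangTriple t r) :
    changPhi t r htr (changOp t r htr a b) = changPhi t r htr a * changPhi t r htr b := by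
  obtain ⟨p, hp⟩ := ZMod.intCast_surjective a.1
  obtain ⟨q, hq⟩ := ZMod.intCast_surjective b.1
  obtain ⟨c, hc⟩ := ZMod.intCast_surjective a.2.2
  obtain ⟨d, hd⟩ := ZMod.intCast_surjective b.2.2
  have hcd : ((p * d + q * c + 2 * c * d : ℤ) : ZMod (2 ^ r)) = (changOp t r htr a b).2.2 := by
    simp only [changOp, ← hp, ← hq, ← hc, ← hd, map_intCast]
    push_cast; ring
  refine Prod.ext rfl ?_
  simp only [changPhi, Prod.snd_mul]
  rw [two_mul_cast_eq_of_intCast_eq hc, two_mul_cast_eq_of_intCast_eq hd,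
    two_mul_cast_eq_of_intCast_eq hcd]
  simp only [changOp, ← hp, ← hq, map_mul, map_intCast]
  push_cast; ring

lemma isUnit_changPhi_snd {a : ChangTriple t r} (ha : IsUnit a.1) :
    IsUnit (changPhi t r htr a).2 := by
  obtain ⟨c, hc⟩ := ZMod.intCast_surjective a.2.2
  rw [changPhi, two_mul_cast_eq_of_intCast_eq hc]
  exact isUnit_castHom_add_two_mul _ ha _

lemma changPhi_eq_one_iff (a : ChangTriple t r) :
    changPhi t r htr a = (1, 1) ↔ ∃ y, a = (1, y, 0) := by
  constructor
  · intro h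
    simp only [changPhi, Prod.mk.injEq] at h
    obtain ⟨hx, hz⟩ := h
    rw [hx, map_one, add_eq_left] at hz
    exact ⟨a.2.1, Prod.ext hx (Prod.ext rfl (eq_zero_of_two_mul_cast_eq_zero hz))⟩
  · rintro ⟨y, rfl⟩
    simp only [changPhi, map_one, ZMod.cast_zero, mul_zero, add_zero]

lemma mem_changE_iff {a : ChangTriple t r} : a ∈ changE t r htr ↔ IsUnit a.1 := by
  refine ⟨fun ⟨b, hab, _⟩ => IsUnit.of_mul_eq_one b.1 (congrArg Prod.fst hab), fun hx => ?_⟩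
  obtain ⟨x, y, z⟩ := a
  -- `z'` solves the third coordinate; multiplicativity of `φ` then makes `φ(a).2` invertible
  -- with inverse `A'`, which pins down the second coordinate of the inverse.
  obtain ⟨x', hx'⟩ := hx.exists_right_inv
  obtain ⟨w', hw'⟩ :=
    (isUnit_castHom_add_two_mul (pow_dvd_pow 2 (by omega : r ≤ t + 1)) hx z).exists_right_inv
  have hπ : ZMod.castHom (pow_dvd_pow 2 (by omega : r + 1 ≤ t + 1)) (ZMod (2 ^ (r + 1))) x
      * ZMod.castHom (pow_dvd_pow 2 (by omega : r + 1 ≤ t + 1)) (ZMod (2 ^ (r + 1))) x' = 1 := by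
    rw [← map_mul, hx', map_one]
  set z' := -(ZMod.castHom (pow_dvd_pow 2 (by omega : r ≤ t + 1)) (ZMod (2 ^ r)) x' * z * w')
  have hz : ZMod.castHom (pow_dvd_pow 2 (by omega : r ≤ t + 1)) (ZMod (2 ^ r)) x * z'
      + ZMod.castHom (pow_dvd_pow 2 (by omega : r ≤ t + 1)) (ZMod (2 ^ r)) x' * z
      + 2 * z * z' = 0 := by
    linear_combination
      (-(ZMod.castHom (pow_dvd_pow 2 (by omega : r ≤ t + 1)) (ZMod (2 ^ r)) x' * z)) * hw'
  obtain ⟨A', hA'⟩ : ∃ A', (changPhi t r htr (x', 0, z')).2 = A' := ⟨_, rfl⟩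
  have hA : (changPhi t r htr (x, y, z)).2 * A' = 1 := by
    rw [← hA', ← Prod.snd_mul, ← changPhi_changOp]
    simp only [changPhi, changOp]
    rw [hz, hx', map_one, ZMod.cast_zero, mul_zero, add_zero]
  refine ⟨(x', -(ZMod.castHom (pow_dvd_pow 2 (by omega : r + 1 ≤ t + 1)) (ZMod (2 ^ (r + 1))) x'
    * y * A'), z'), ?_, ?_⟩
  · simp only [changPhi] at hA'
    simp only [changOp, Prod.mk.injEq]
    refine ⟨hx', ?_, hz⟩
    linear_combination (-(y * A')) * hπ + y * hA'
  · simp only [changPhi] at hA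
    simp only [changOp, Prod.mk.injEq]
    refine ⟨by rw [mul_comm, hx'], ?_, by linear_combination hz⟩
    linear_combination
      (-(ZMod.castHom (pow_dvd_pow 2 (by omega : r + 1 ≤ t + 1)) (ZMod (2 ^ (r + 1))) x' * y))
        * hA

lemma exists_changPhi_eq {u : ZMod (2 ^ (t + 1))} {v : ZMod (2 ^ (r + 1))} (hu : IsUnit u)
    (hv : IsUnit v) : ∃ z, changPhi t r htr (u, 0, z) = (u, v) := by
  obtain ⟨p, rfl⟩ := ZMod.intCast_surjective u
  obtain ⟨q, rfl⟩ := ZMod.intCast_surjective v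
  rw [isUnit_intCast_two_pow_iff t.succ_ne_zero] at hu
  rw [isUnit_intCast_two_pow_iff r.succ_ne_zero] at hv
  obtain ⟨d, hd⟩ := hv.sub_odd hu
  refine ⟨d, Prod.ext rfl ?_⟩
  simp only [changPhi, map_intCast, two_mul_cast_eq_of_intCast_eq rfl]
  rw [show q = p + 2 * d by linarith]
  push_cast; ring

lemma changOp_one_one_zero_iterate (n : ℕ) :
    (fun b => changOp t r htr (1, 1, 0) b)^[n] (1, 0, 0) = ((1, n, 0) : ChangTriple t r) := by
  induction n with
  | zero => rw [Nat.cast_zero]; rfl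
  | succ n ih =>
    rw [Function.iterate_succ_apply', ih]
    simp only [changOp, map_one, ZMod.cast_zero, Prod.mk.injEq]
    push_cast
    refine ⟨mul_one 1, by ring, by ring⟩

lemma changKernel_eq_range :
    {a | a ∈ changE t r htr ∧ changPhi t r htr a = (1, 1)}
      = Set.range fun y => ((1, y, 0) : ChangTriple t r) := by
  ext a
  simp only [Set.mem_ofPred_eq, Set.mem_range, mem_changE_iff, changPhi_eq_one_iff,
    eq_comm (a := a)]
  exact ⟨fun ⟨_, h⟩ => h, fun ⟨y, hy⟩ => ⟨hy ▸ isUnit_one, y, hy⟩⟩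

end Chang

theorem stmt5_general (t r : ℕ) (htr : r ≤ t) :
    -- φ is multiplicative on E(t,r)
    (∀ a ∈ changE t r htr, ∀ b ∈ changE t r htr,
      changPhi t r htr (changOp t r htr a b)
        = ((changPhi t r htr a).1 * (changPhi t r htr b).1,
           (changPhi t r htr a).2 * (changPhi t r htr b).2)) ∧
    -- φ maps E(t,r) into the product of unit groups
    (∀ a ∈ changE t r htr, IsUnit (changPhi t r htr a).1 ∧ IsUnit (changPhi t r htr a).2) ∧
    -- φ is surjective onto the product of unit groups
    (∀ u : ZMod (2 ^ (t + 1)), ∀ v : ZMod (2 ^ (r + 1)), IsUnit u → IsUnit v →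
      ∃ a ∈ changE t r htr, changPhi t r htr a = (u, v)) ∧
    -- the kernel of φ is exactly {(1, y, 0)}
    (∀ a ∈ changE t r htr,
      (changPhi t r htr a = (1, 1) ↔ ∃ y : ZMod (2 ^ (r + 1)), a = (1, y, 0))) ∧
    (∀ y : ZMod (2 ^ (r + 1)), (1, y, 0) ∈ changE t r htr) ∧
    -- the kernel has order 2^{r+1}
    Nat.card {a : ZMod (2 ^ (t + 1)) × ZMod (2 ^ (r + 1)) × ZMod (2 ^ r) //
        a ∈ changE t r htr ∧ changPhi t r htr a = (1, 1)} = 2 ^ (r + 1) ∧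
    -- the kernel is cyclic, generated by (1,1,0)
    (∀ a ∈ changE t r htr, changPhi t r htr a = (1, 1) →
      ∃ n : ℕ, a = (fun b => changOp t r htr (1, 1, 0) b)^[n] (1, 0, 0)) := by
  refine ⟨fun a _ b _ => changPhi_changOp a b, fun a ha => ?_, fun u v hu hv => ?_,
    fun a _ => changPhi_eq_one_iff a, fun _ => mem_changE_iff.mpr isUnit_one, ?_, ?_⟩
  · exact ⟨mem_changE_iff.mp ha, isUnit_changPhi_snd (mem_changE_iff.mp ha)⟩
  · obtain ⟨z, hz⟩ := exists_changPhi_eq (htr := htr) hu hv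
    exact ⟨_, mem_changE_iff.mpr hu, hz⟩
  · rw [← Set.coe_ofPred, changKernel_eq_range,
      Nat.card_range_of_injective fun y y' h => congrArg (·.2.1) h, Nat.card_zmod]
  · rintro a - h
    obtain ⟨y, rfl⟩ := (changPhi_eq_one_iff a).mp h
    exact ⟨y.val, by rw [changOp_one_one_zero_iterate, ZMod.natCast_zmod_val]⟩

/-- For `t ≥ r ≥ 1`, the map `φ(x,y,z) = (x, π(x) + μ(z))` is a surjective group
homomorphism from `E(t,r)` onto `(ℤ/2^{t+1})ˣ × (ℤ/2^{r+1})ˣ`, and its kernel is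
`{(1,y,0) : y ∈ ℤ/2^{r+1}}`, a cyclic subgroup of order `2^{r+1}` generated by
`(1,1,0)`. -/
theorem stmt5 (t r : ℕ) (hr : 1 ≤ r) (htr : r ≤ t) :
    -- φ is multiplicative on E(t,r)
    (∀ a ∈ changE t r htr, ∀ b ∈ changE t r htr,
      changPhi t r htr (changOp t r htr a b)
        = ((changPhi t r htr a).1 * (changPhi t r htr b).1,
           (changPhi t r htr a).2 * (changPhi t r htr b).2)) ∧
    -- φ maps E(t,r) into the product of unit groups
    (∀ a ∈ changE t r htr, IsUnit (changPhi t r htr a).1 ∧ IsUnit (changPhi t r htr a).2) ∧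
    -- φ is surjective onto the product of unit groups
    (∀ u : ZMod (2 ^ (t + 1)), ∀ v : ZMod (2 ^ (r + 1)), IsUnit u → IsUnit v →
      ∃ a ∈ changE t r htr, changPhi t r htr a = (u, v)) ∧
    -- the kernel of φ is exactly {(1, y, 0)}
    (∀ a ∈ changE t r htr,
      (changPhi t r htr a = (1, 1) ↔ ∃ y : ZMod (2 ^ (r + 1)), a = (1, y, 0))) ∧
    (∀ y : ZMod (2 ^ (r + 1)), (1, y, 0) ∈ changE t r htr) ∧
    -- the kernel has order 2^{r+1}
    Nat.card {a : ZMod (2 ^ (t + 1)) × ZMod (2 ^ (r + 1)) × ZMod (2 ^ r) //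
        a ∈ changE t r htr ∧ changPhi t r htr a = (1, 1)} = 2 ^ (r + 1) ∧
    -- the kernel is cyclic, generated by (1,1,0)
    (∀ a ∈ changE t r htr, changPhi t r htr a = (1, 1) →
      ∃ n : ℕ, a = (fun b => changOp t r htr (1, 1, 0) b)^[n] (1, 0, 0)) :=
  stmt5_general t r htr
end

section
/- In the group E(t,r) of invertible elements of G(t,r), for every element g = (x,0,z) with x a unit of ℤ/2^{t+1} and z ∈ ℤ/2^r, if g⁻¹ = (x',0,z') denotes its inverse, then the conjugate g ∘ (1,1,0) ∘ g⁻¹ equals (1, 1 + π(x)·μ(z'), 0). -/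
/-!
The middle coordinate of `a ∘ b` depends affinely on that of `a`, with slope `π(b₁) + μ(b₃)`, and
right composition with `(1,1,0)` just adds `π(x)` to it. Hence `g ∘ (1,1,0) ∘ g⁻¹` is
`g ∘ g⁻¹ = (1,0,0)` shifted by `π(x)·(π(x') + μ(z')) = 1 + π(x)·μ(z')` in the middle, as `x x' = 1`.
-/

section ChangOp

variable {t r : ℕ} (htr : r ≤ t)

local notation "π" =>
  ZMod.castHom (pow_dvd_pow 2 (by omega : r + 1 ≤ t + 1)) (ZMod (2 ^ (r + 1)))

local notation "μ" z => 2 * (ZMod.cast z : ZMod (2 ^ (r + 1)))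

theorem changOp_one_one_zero (a : ZMod (2 ^ (t + 1)) × ZMod (2 ^ (r + 1)) × ZMod (2 ^ r)) :
    changOp t r htr a (1, 1, 0) = (a.1, π a.1 + a.2.1, a.2.2) := by
  simp [changOp, ZMod.cast_one (pow_dvd_pow 2 (by omega : r ≤ t + 1)),
    ZMod.cast_one (pow_dvd_pow 2 (by omega : r + 1 ≤ t + 1))]

theorem changOp_eq_changOp_zero_snd_add (a b : ZMod (2 ^ (t + 1)) × ZMod (2 ^ (r + 1)) × ZMod (2 ^ r)) :
    changOp t r htr a b
      = changOp t r htr (a.1, 0, a.2.2) b + (0, a.2.1 * (π b.1 + μ b.2.2), 0) := by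
  simp only [changOp, Prod.mk_add_mk]
  ext <;> ring

end ChangOp

/-- For `t ≥ r ≥ 1`: in the group `E(t,r)` of invertible elements of `G(t,r)`, if
`g = (x,0,z)` with `x` a unit and `g⁻¹ = (x',0,z')`, then
`g ∘ (1,1,0) ∘ g⁻¹ = (1, 1 + π(x)·μ(z'), 0)`. -/
theorem stmt7 (t r : ℕ) (htr : r ≤ t)
    (x x' : ZMod (2 ^ (t + 1))) (z z' : ZMod (2 ^ r))
    (hinv₁ : changOp t r htr (x, 0, z) (x', 0, z') = (1, 0, 0)) :
    changOp t r htr (changOp t r htr (x, 0, z) (1, 1, 0)) (x', 0, z')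
      = (1,
         1 + ZMod.castHom (pow_dvd_pow 2 (by omega : r + 1 ≤ t + 1)) (ZMod (2 ^ (r + 1))) x
           * (2 * (ZMod.cast z' : ZMod (2 ^ (r + 1)))),
         0) := by
  have hxx' : x * x' = 1 := congrArg Prod.fst hinv₁
  rw [changOp_one_one_zero, changOp_eq_changOp_zero_snd_add]
  simp only [add_zero, hinv₁, Prod.mk_add_mk, zero_add, mul_add, ← map_mul, hxx', map_one]
end
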